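/- arXiv:1602.04589 — 8 statements merged into one kernel-verified Lean document; each statement's English description precedes it below -/
import Mathlib

section
/- Let K ≥ 2 and let μ ∈ (0,1)^K satisfy μ_1 > μ_a for all a ≥ 2. Then for every w ∈ Σ_K, inf_{λ ∈ Alt(μ)} Σ_{a=1}^K w_a·kl(μ_a, λ_a) = min_{a ≠ 1} (w_1 + w_a)·I_{w_1/(w_1+w_a)}(μ_1, μ_a), with the convention that the a-th term on the right equals 0 when w_1 + w_a = 0. -/
/-- Bernoulli Kullback–Leibler divergence. -/
noncomputable def kl (x y : ℝ) : ℝ :=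
  x * Real.log (x / y) + (1 - x) * Real.log ((1 - x) / (1 - y))

/-- The parameterized Jensen–Shannon-type divergence `I_α`. -/
noncomputable def Ialpha (α x y : ℝ) : ℝ :=
  α * kl x (α * x + (1 - α) * y) + (1 - α) * kl y (α * x + (1 - α) * y)

/-- The probability simplex on `Fin K`. -/
def simplex (K : ℕ) : Set (Fin K → ℝ) :=
  {w | (∀ a, 0 ≤ w a) ∧ ∑ a, w a = 1}

/-- Alternative bandit models: vectors in `(0,1)^K` whose unique best arm is not arm `0`. -/
def Alt {K : ℕ} [NeZero K] (μ : Fin K → ℝ) : Set (Fin K → ℝ) :=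
  {lam | (∀ a, lam a ∈ Set.Ioo (0 : ℝ) 1) ∧ ∃ a, a ≠ 0 ∧ ∀ b, b ≠ a → lam b < lam a}

lemma erase_zero_nonempty (K : ℕ) :
    ((Finset.univ : Finset (Fin (K + 2))).erase 0).Nonempty :=
  ⟨1, Finset.mem_erase.mpr ⟨by simp [Fin.ext_iff], Finset.mem_univ _⟩⟩

/-!
An alternative model has a best arm `a ≠ 0`, so `λ₀ < λₐ`, and the cost of arms `0` and `a` alone is
at least the value of the two-arm problem `min_{λ₀ ≤ λₐ} w₀ kl(μ₀, λ₀) + wₐ kl(μₐ, λₐ)`. Since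
`μₐ < μ₀`, this minimum is attained at `λ₀ = λₐ = mₐ`, the `w`-weighted mean of `μ₀` and `μₐ`, and
equals `(w₀ + wₐ) I_{w₀/(w₀+wₐ)}(μ₀, μₐ)`: both facts follow from the sign of the derivative of
`t ↦ w₀ kl(μ₀, t) + wₐ kl(μₐ, t)`, which is the sign of `t - mₐ`.

Conversely, moving arms `0` and `a` to `mₐ`, keeping the other arms at `μ_b` and raising arm `a`
slightly gives an alternative of cost close to that of the pair, provided `μ_b ≤ mₐ` for every other
arm `b`. If `μ_b > mₐ`, then arm `b` is at least as cheap as `a` (its pair cost is at most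
`w₀ kl(μ₀, μ_b) ≤ w₀ kl(μ₀, mₐ)`) and has a larger pooled mean `m_b ≥ μ_b`, so an arm of minimal
cost with the largest pooled mean has no such obstruction.
-/

open Set

noncomputable def weightedMean (p q x y : ℝ) : ℝ :=
  (p * x + q * y) / (p + q)

noncomputable def pairCost (p q x y : ℝ) : ℝ :=
  if p + q = 0 then 0 else (p + q) * Ialpha (p / (p + q)) x y

section Divergence

variable {p q x y t : ℝ}

@[simp]
lemma kl_self (x : ℝ) : kl x x = 0 := by
  by_cases h0 : x = 0 <;> by_cases h1 : 1 - x = 0 <;> simp [kl, h0, h1]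

lemma hasDerivAt_kl (hx : x ∈ Ioo 0 1) (ht : t ∈ Ioo 0 1) :
    HasDerivAt (kl x) ((t - x) / (t * (1 - t))) t := by
  obtain ⟨hx0, hx1⟩ := hx
  obtain ⟨ht0, ht1⟩ := ht
  have hx1' : 0 < 1 - x := sub_pos.2 hx1
  have ht1' : 0 < 1 - t := sub_pos.2 ht1
  have hA : HasDerivAt (fun s => x / s) (x * -(t ^ 2)⁻¹) t := by
    simpa [div_eq_mul_inv] using (hasDerivAt_inv ht0.ne').const_mul x
  have hB : HasDerivAt (fun s => (1 - x) / (1 - s)) ((1 - x) * (-(-1) / (1 - t) ^ 2)) t := by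
    simpa [div_eq_mul_inv] using
      (((hasDerivAt_id t).const_sub 1).inv ht1'.ne').const_mul (1 - x)
  have h : HasDerivAt (kl x) (x * ((x * -(t ^ 2)⁻¹) / (x / t))
      + (1 - x) * ((1 - x) * (-(-1) / (1 - t) ^ 2) / ((1 - x) / (1 - t)))) t :=
    ((hA.log (by positivity)).const_mul x).add ((hB.log (by positivity)).const_mul (1 - x))
  refine h.congr_deriv ?_
  field_simp
  ring

lemma hasDerivAt_weightedKl (hx : x ∈ Ioo 0 1) (hy : y ∈ Ioo 0 1) (ht : t ∈ Ioo 0 1) :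
    HasDerivAt (fun s => p * kl x s + q * kl y s)
      (((p + q) * t - (p * x + q * y)) / (t * (1 - t))) t := by
  refine (((hasDerivAt_kl hx ht).const_mul p).add
    ((hasDerivAt_kl hy ht).const_mul q)).congr_deriv ?_
  ring

lemma weightedMean_mem_Ioo (hx : x ∈ Ioo 0 1) (hy : y ∈ Ioo 0 1) (hp : 0 ≤ p) (hq : 0 ≤ q)
    (hpq : 0 < p + q) : weightedMean p q x y ∈ Ioo 0 1 := by
  convert convex_iff_div.1 (convex_Ioo (0 : ℝ) 1) hx hy hp hq hpq using 1
  simp only [weightedMean, smul_eq_mul]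
  field_simp

lemma weightedMean_mem_Icc (hp : 0 ≤ p) (hq : 0 ≤ q) (hpq : 0 < p + q) (hyx : y ≤ x) :
    weightedMean p q x y ∈ Icc y x := by
  rw [weightedMean, mem_Icc, le_div_iff₀ hpq, div_le_iff₀ hpq]
  constructor <;> nlinarith [mul_le_mul_of_nonneg_left hyx hp, mul_le_mul_of_nonneg_left hyx hq]

lemma antitoneOn_weightedKl (hx : x ∈ Ioo 0 1) (hy : y ∈ Ioo 0 1) (hp : 0 ≤ p) (hq : 0 ≤ q)
    (hpq : 0 < p + q) :
    AntitoneOn (fun s => p * kl x s + q * kl y s) (Ioc 0 (weightedMean p q x y)) := by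
  have hm := weightedMean_mem_Ioo hx hy hp hq hpq
  have hsub : Ioc 0 (weightedMean p q x y) ⊆ Ioo 0 1 := fun t ht => ⟨ht.1, ht.2.trans_lt hm.2⟩
  refine antitoneOn_of_hasDerivWithinAt_nonpos (convex_Ioc _ _)
    (fun t ht => (hasDerivAt_weightedKl hx hy (hsub ht)).continuousAt.continuousWithinAt)
    (fun t ht => (hasDerivAt_weightedKl hx hy (hsub (interior_subset ht))).hasDerivWithinAt)
    fun t ht => ?_
  rw [interior_Ioc] at ht
  have ht' := hsub (Ioo_subset_Ioc_self ht)
  have hlt := (lt_div_iff₀ hpq).1 ht.2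
  exact div_nonpos_of_nonpos_of_nonneg (by linarith) (mul_pos ht'.1 (sub_pos.2 ht'.2)).le

lemma monotoneOn_weightedKl (hx : x ∈ Ioo 0 1) (hy : y ∈ Ioo 0 1) (hp : 0 ≤ p) (hq : 0 ≤ q)
    (hpq : 0 < p + q) :
    MonotoneOn (fun s => p * kl x s + q * kl y s) (Ico (weightedMean p q x y) 1) := by
  have hm := weightedMean_mem_Ioo hx hy hp hq hpq
  have hsub : Ico (weightedMean p q x y) 1 ⊆ Ioo 0 1 := fun t ht => ⟨hm.1.trans_le ht.1, ht.2⟩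
  refine monotoneOn_of_hasDerivWithinAt_nonneg (convex_Ico _ _)
    (fun t ht => (hasDerivAt_weightedKl hx hy (hsub ht)).continuousAt.continuousWithinAt)
    (fun t ht => (hasDerivAt_weightedKl hx hy (hsub (interior_subset ht))).hasDerivWithinAt)
    fun t ht => ?_
  rw [interior_Ico] at ht
  have ht' := hsub (Ioo_subset_Ico_self ht)
  have hlt := (div_lt_iff₀ hpq).1 ht.1
  exact div_nonneg (by linarith) (mul_pos ht'.1 (sub_pos.2 ht'.2)).le

lemma weightedKl_weightedMean_le (hx : x ∈ Ioo 0 1) (hy : y ∈ Ioo 0 1) (hp : 0 ≤ p)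
    (hq : 0 ≤ q) (hpq : 0 < p + q) (ht : t ∈ Ioo 0 1) :
    p * kl x (weightedMean p q x y) + q * kl y (weightedMean p q x y) ≤
      p * kl x t + q * kl y t := by
  have hm := weightedMean_mem_Ioo hx hy hp hq hpq
  rcases le_total t (weightedMean p q x y) with h | h
  · exact antitoneOn_weightedKl hx hy hp hq hpq ⟨ht.1, h⟩ ⟨hm.1, le_rfl⟩ h
  · exact monotoneOn_weightedKl hx hy hp hq hpq ⟨le_rfl, hm.2⟩ ⟨h, ht.2⟩ h

lemma kl_nonneg (hx : x ∈ Ioo 0 1) (ht : t ∈ Ioo 0 1) : 0 ≤ kl x t := by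
  simpa [weightedMean] using
    weightedKl_weightedMean_le (p := 1) (q := 0) hx hx zero_le_one le_rfl (by norm_num) ht

lemma kl_antitoneOn (hx : x ∈ Ioo 0 1) : AntitoneOn (kl x) (Ioc 0 x) := by
  simpa [weightedMean] using
    antitoneOn_weightedKl (p := 1) (q := 0) hx hx zero_le_one le_rfl (by norm_num)

lemma kl_monotoneOn (hx : x ∈ Ioo 0 1) : MonotoneOn (kl x) (Ico x 1) := by
  simpa [weightedMean] using
    monotoneOn_weightedKl (p := 1) (q := 0) hx hx zero_le_one le_rfl (by norm_num)

lemma weightedKl_weightedMean_le_of_le (hx : x ∈ Ioo 0 1) (hy : y ∈ Ioo 0 1) (hp : 0 ≤ p)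
    (hq : 0 ≤ q) (hpq : 0 < p + q) (hyx : y ≤ x) {s u : ℝ} (hs : s ∈ Ioo 0 1) (hu : u ∈ Ioo 0 1)
    (hsu : s ≤ u) :
    p * kl x (weightedMean p q x y) + q * kl y (weightedMean p q x y) ≤
      p * kl x s + q * kl y u := by
  set m := weightedMean p q x y
  obtain ⟨hym, hmx⟩ := weightedMean_mem_Icc hp hq hpq hyx
  have hm := weightedMean_mem_Ioo hx hy hp hq hpq
  rcases le_total u m with hum | hmu
  · have hkl := kl_antitoneOn hx ⟨hs.1, by linarith⟩ ⟨hu.1, by linarith⟩ hsu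
    linarith [weightedKl_weightedMean_le hx hy hp hq hpq hu, mul_le_mul_of_nonneg_left hkl hp]
  rcases le_total m s with hms | hsm
  · have hkl := kl_monotoneOn hy ⟨by linarith, hs.2⟩ ⟨by linarith, hu.2⟩ hsu
    linarith [weightedKl_weightedMean_le hx hy hp hq hpq hs, mul_le_mul_of_nonneg_left hkl hq]
  · have hkx := kl_antitoneOn hx ⟨hs.1, by linarith⟩ ⟨hm.1, hmx⟩ hsm
    have hky := kl_monotoneOn hy ⟨hym, hm.2⟩ ⟨by linarith, hu.2⟩ hmu
    linarith [mul_le_mul_of_nonneg_left hkx hp, mul_le_mul_of_nonneg_left hky hq]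

end Divergence

section PairCost

variable {p q r x y z : ℝ}

lemma pairCost_of_pos (hpq : 0 < p + q) :
    pairCost p q x y = p * kl x (weightedMean p q x y) + q * kl y (weightedMean p q x y) := by
  have hmean : p / (p + q) * x + (1 - p / (p + q)) * y = weightedMean p q x y := by
    rw [weightedMean]
    field_simp
    ring
  rw [pairCost, if_neg hpq.ne', Ialpha, hmean]
  field_simp
  ring

lemma pairCost_nonneg (hx : x ∈ Ioo 0 1) (hy : y ∈ Ioo 0 1) (hp : 0 ≤ p) (hq : 0 ≤ q) :
    0 ≤ pairCost p q x y := by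
  rcases (add_nonneg hp hq).eq_or_lt with h | h
  · rw [pairCost, if_pos h.symm]
  · have hm := weightedMean_mem_Ioo hx hy hp hq h
    rw [pairCost_of_pos h]
    exact add_nonneg (mul_nonneg hp (kl_nonneg hx hm)) (mul_nonneg hq (kl_nonneg hy hm))

lemma pairCost_le_of_le (hx : x ∈ Ioo 0 1) (hy : y ∈ Ioo 0 1) (hp : 0 ≤ p) (hq : 0 ≤ q)
    (hyx : y ≤ x) {s u : ℝ} (hs : s ∈ Ioo 0 1) (hu : u ∈ Ioo 0 1) (hsu : s ≤ u) :
    pairCost p q x y ≤ p * kl x s + q * kl y u := by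
  rcases (add_nonneg hp hq).eq_or_lt with h | h
  · rw [pairCost, if_pos h.symm]
    exact add_nonneg (mul_nonneg hp (kl_nonneg hx hs)) (mul_nonneg hq (kl_nonneg hy hu))
  · rw [pairCost_of_pos h]
    exact weightedKl_weightedMean_le_of_le hx hy hp hq h hyx hs hu hsu

lemma pairCost_le_pairCost_of_weightedMean_le (hx : x ∈ Ioo 0 1) (hy : y ∈ Ioo 0 1)
    (hz : z ∈ Ioo 0 1) (hp : 0 ≤ p) (hq : 0 ≤ q) (hr : 0 ≤ r) (hpq : 0 < p + q) (hyx : y ≤ x)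
    (hzx : z ≤ x) (hmz : weightedMean p q x y ≤ z) :
    pairCost p r x z ≤ pairCost p q x y := by
  have hm := weightedMean_mem_Ioo hx hy hp hq hpq
  have hmx := (weightedMean_mem_Icc hp hq hpq hyx).2
  calc pairCost p r x z ≤ p * kl x z + r * kl z z := pairCost_le_of_le hx hz hp hr hzx hz hz le_rfl
    _ = p * kl x z := by rw [kl_self, mul_zero, add_zero]
    _ ≤ p * kl x (weightedMean p q x y) :=
      mul_le_mul_of_nonneg_left (kl_antitoneOn hx ⟨hm.1, hmx⟩ ⟨hz.1, hzx⟩ hmz) hp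
    _ ≤ p * kl x (weightedMean p q x y) + q * kl y (weightedMean p q x y) :=
      le_add_of_nonneg_right (mul_nonneg hq (kl_nonneg hy hm))
    _ = pairCost p q x y := (pairCost_of_pos hpq).symm

end PairCost

section Alternatives

variable {n : ℕ} [NeZero n] {μ w : Fin n → ℝ}

lemma sum_mul_kl_eq_of_forall_ne {lam : Fin n → ℝ} {a : Fin n} (ha : a ≠ 0)
    (h : ∀ b, b ≠ 0 → b ≠ a → lam b = μ b) :
    ∑ b, w b * kl (μ b) (lam b) = w 0 * kl (μ 0) (lam 0) + w a * kl (μ a) (lam a) := by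
  rw [← Finset.sum_pair (f := fun b => w b * kl (μ b) (lam b)) ha.symm]
  refine (Finset.sum_subset (Finset.subset_univ _) fun b _ hb => ?_).symm
  simp only [Finset.mem_insert, Finset.mem_singleton, not_or] at hb
  rw [h b hb.1 hb.2, kl_self, mul_zero]

lemma add_mul_kl_le_sum_mul_kl (hμ : ∀ b, μ b ∈ Ioo 0 1) (hw : ∀ b, 0 ≤ w b) {lam : Fin n → ℝ}
    (hlam : ∀ b, lam b ∈ Ioo 0 1) {a : Fin n} (ha : a ≠ 0) :
    w 0 * kl (μ 0) (lam 0) + w a * kl (μ a) (lam a) ≤ ∑ b, w b * kl (μ b) (lam b) := by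
  rw [← Finset.sum_pair (f := fun b => w b * kl (μ b) (lam b)) ha.symm]
  exact Finset.sum_le_sum_of_subset_of_nonneg (Finset.subset_univ _)
    fun b _ _ => mul_nonneg (hw b) (kl_nonneg (hμ b) (hlam b))

lemma exists_pairCost_le_sum_mul_kl (hμ : ∀ b, μ b ∈ Ioo 0 1) (hbest : ∀ b, b ≠ 0 → μ b < μ 0)
    (hw : ∀ b, 0 ≤ w b) {lam : Fin n → ℝ} (hlam : lam ∈ Alt μ) :
    ∃ a ≠ 0, pairCost (w 0) (w a) (μ 0) (μ a) ≤ ∑ b, w b * kl (μ b) (lam b) := by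
  obtain ⟨hlam, a, ha, hmax⟩ := hlam
  exact ⟨a, ha, (pairCost_le_of_le (hμ 0) (hμ a) (hw 0) (hw a) (hbest a ha).le (hlam 0) (hlam a)
    (hmax 0 ha.symm).le).trans (add_mul_kl_le_sum_mul_kl hμ hw hlam ha)⟩

lemma bddBelow_sum_mul_kl (hμ : ∀ b, μ b ∈ Ioo 0 1) (hw : ∀ b, 0 ≤ w b) :
    BddBelow (range fun lam : Alt μ => ∑ b, w b * kl (μ b) ((lam : Fin n → ℝ) b)) := by
  refine ⟨0, ?_⟩
  rintro _ ⟨lam, rfl⟩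
  exact Finset.sum_nonneg fun b _ => mul_nonneg (hw b) (kl_nonneg (hμ b) (lam.2.1 b))

lemma update_update_mem_Alt (hμ : ∀ b, μ b ∈ Ioo 0 1) {a : Fin n} (ha : a ≠ 0) {t s : ℝ}
    (ht : t ∈ Ioo 0 1) (hs : s ∈ Ioo t 1) (hdom : ∀ b, b ≠ 0 → b ≠ a → μ b ≤ t) :
    Function.update (Function.update μ 0 t) a s ∈ Alt μ := by
  refine ⟨fun b => ?_, a, ha, fun b hb => ?_⟩
  · rcases eq_or_ne b a with rfl | hba
    · simpa using ⟨ht.1.trans hs.1, hs.2⟩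
    rcases eq_or_ne b 0 with rfl | hb0
    · simpa [hba] using ht
    · simpa [hba, hb0] using hμ b
  · rw [Function.update_self, Function.update_of_ne hb]
    rcases eq_or_ne b 0 with rfl | hb0
    · simpa using hs.1
    · simpa [hb0] using (hdom b hb0 hb).trans_lt hs.1

lemma nonempty_Alt (hμ : ∀ b, μ b ∈ Ioo 0 1) (hbest : ∀ b, b ≠ 0 → μ b < μ 0) {a : Fin n}
    (ha : a ≠ 0) : Nonempty (Alt μ) :=
  have h0 := hμ 0
  ⟨⟨_, update_update_mem_Alt hμ ha h0 (s := (μ 0 + 1) / 2) ⟨by linarith [h0.2], by linarith [h0.2]⟩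
    fun b hb0 _ => (hbest b hb0).le⟩⟩

lemma iInf_sum_mul_kl_le (hμ : ∀ b, μ b ∈ Ioo 0 1) (hw : ∀ b, 0 ≤ w b) {a : Fin n} (ha : a ≠ 0)
    {t : ℝ} (ht : t ∈ Ioo 0 1) (hdom : ∀ b, b ≠ 0 → b ≠ a → μ b ≤ t) :
    ⨅ lam : Alt μ, ∑ b, w b * kl (μ b) ((lam : Fin n → ℝ) b) ≤
      w 0 * kl (μ 0) t + w a * kl (μ a) t := by
  -- `Alt μ` asks for a strict best arm, so arm `a` is put at `s > t` and `s` is let tend to `t`.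
  have hcont : ContinuousAt (fun s => w 0 * kl (μ 0) t + w a * kl (μ a) s) t :=
    continuousAt_const.add (continuousAt_const.mul (hasDerivAt_kl (hμ a) ht).continuousAt)
  refine ge_of_tendsto (hcont.tendsto.mono_left (nhdsWithin_le_nhds (s := Ioi t))) ?_
  filter_upwards [Ioo_mem_nhdsGT ht.2] with s hs
  refine (ciInf_le (bddBelow_sum_mul_kl hμ hw) ⟨_, update_update_mem_Alt hμ ha ht hs hdom⟩).trans
    (le_of_eq ?_)
  rw [sum_mul_kl_eq_of_forall_ne ha fun b hb0 hba => by simp [hb0, hba]]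
  simp [ha.symm]

lemma iInf_sum_mul_kl_le_pairCost_of_pos (hμ : ∀ b, μ b ∈ Ioo 0 1)
    (hbest : ∀ b, b ≠ 0 → μ b < μ 0) (hw : ∀ b, 0 ≤ w b) (hw0 : 0 < w 0) {a : Fin n}
    (ha : a ≠ 0) :
    ⨅ lam : Alt μ, ∑ b, w b * kl (μ b) ((lam : Fin n → ℝ) b) ≤
      pairCost (w 0) (w a) (μ 0) (μ a) := by
  set I := ⨅ lam : Alt μ, ∑ b, w b * kl (μ b) ((lam : Fin n → ℝ) b)
  set m : Fin n → ℝ := fun b => weightedMean (w 0) (w b) (μ 0) (μ b)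
  have hpos : ∀ b, 0 < w 0 + w b := fun b => add_pos_of_pos_of_nonneg hw0 (hw b)
  by_contra! hlt
  obtain ⟨c, hc, hmax⟩ := (Finset.univ.filter fun b => b ≠ 0 ∧
    pairCost (w 0) (w b) (μ 0) (μ b) < I).exists_max_image m ⟨a, by simp [ha, hlt]⟩
  simp only [Finset.mem_filter, Finset.mem_univ, true_and] at hc hmax
  have hdom : ∀ b, b ≠ 0 → b ≠ c → μ b ≤ m c := by
    intro b hb0 _
    by_contra! hb
    have hcost := pairCost_le_pairCost_of_weightedMean_le (hμ 0) (hμ c) (hμ b) (hw 0) (hw c)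
      (hw b) (hpos c) (hbest c hc.1).le (hbest b hb0).le hb.le
    have hmb := (weightedMean_mem_Icc (hw 0) (hw b) (hpos b) (hbest b hb0).le).1
    linarith [hmax b ⟨hb0, hcost.trans_lt hc.2⟩]
  have hI := iInf_sum_mul_kl_le hμ hw hc.1
    (weightedMean_mem_Ioo (hμ 0) (hμ c) (hw 0) (hw c) (hpos c)) hdom
  rw [← pairCost_of_pos (hpos c)] at hI
  exact hc.2.not_ge hI

lemma iInf_sum_mul_kl_le_pairCost (hμ : ∀ b, μ b ∈ Ioo 0 1)
    (hbest : ∀ b, b ≠ 0 → μ b < μ 0) (hw : ∀ b, 0 ≤ w b) {a : Fin n} (ha : a ≠ 0) :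
    ⨅ lam : Alt μ, ∑ b, w b * kl (μ b) ((lam : Fin n → ℝ) b) ≤
      pairCost (w 0) (w a) (μ 0) (μ a) := by
  rcases (hw 0).eq_or_lt with h0 | h0
  -- With `w 0 = 0`, moving arm `0` up to the largest other mean costs nothing.
  · obtain ⟨b, hb, hmax⟩ := (Finset.univ.erase 0).exists_max_image μ ⟨a, by simpa using ha⟩
    calc _ ≤ w 0 * kl (μ 0) (μ b) + w b * kl (μ b) (μ b) :=
          iInf_sum_mul_kl_le hμ hw (Finset.ne_of_mem_erase hb) (hμ b)
            fun c hc0 _ => hmax c (Finset.mem_erase.2 ⟨hc0, Finset.mem_univ c⟩)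
      _ = 0 := by rw [← h0, kl_self]; ring
      _ ≤ _ := pairCost_nonneg (hμ 0) (hμ a) (hw 0) (hw a)
  · exact iInf_sum_mul_kl_le_pairCost_of_pos hμ hbest hw h0 ha

end Alternatives

/-- the best-response transportation cost for a fixed `w` in the simplex. -/
theorem inf_alt_eq_min (K : ℕ) (μ : Fin (K + 2) → ℝ)
    (hμ : ∀ a, μ a ∈ Set.Ioo (0 : ℝ) 1)
    (hbest : ∀ a : Fin (K + 2), a ≠ 0 → μ a < μ 0)
    (w : Fin (K + 2) → ℝ) (hw : w ∈ simplex (K + 2)) :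
    (⨅ lam : Alt μ, ∑ a, w a * kl (μ a) ((lam : Fin (K + 2) → ℝ) a)) =
      ((Finset.univ : Finset (Fin (K + 2))).erase 0).inf' (erase_zero_nonempty K)
        (fun a => if w 0 + w a = 0 then 0
          else (w 0 + w a) * Ialpha (w 0 / (w 0 + w a)) (μ 0) (μ a)) := by
  obtain ⟨hw_nonneg, -⟩ := hw
  have := nonempty_Alt hμ hbest (one_ne_zero : (1 : Fin (K + 2)) ≠ 0)
  refine le_antisymm (Finset.le_inf' _ _ fun a ha =>
    iInf_sum_mul_kl_le_pairCost hμ hbest hw_nonneg (Finset.ne_of_mem_erase ha))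
    (le_ciInf fun lam => ?_)
  obtain ⟨a, ha, hle⟩ := exists_pairCost_le_sum_mul_kl hμ hbest hw_nonneg lam.2
  exact (Finset.inf'_le _ (Finset.mem_erase.2 ⟨ha, Finset.mem_univ a⟩)).trans hle
end

section
/- Let 0 < μ_a < μ_1 < 1 and let w_1, w_a > 0. Then the infimum over pairs (λ_1, λ_a) ∈ (0,1)² with λ_a ≥ λ_1 of w_1·kl(μ_1, λ_1) + w_a·kl(μ_a, λ_a) equals (w_1 + w_a)·I_{w_1/(w_1+w_a)}(μ_1, μ_a), and this infimum is attained at λ_1 = λ_a = (w_1·μ_1 + w_a·μ_a)/(w_1 + w_a). -/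
/-!
`y ↦ kl x y` is convex with derivative `(y - x) / (y (1 - y))`. At the weighted mean `m` of
`μ₁` and `μₐ` the weighted tangent slopes cancel, so the tangent-line bounds at `m` give
`w₁ kl(μ₁, λ₁) + wₐ kl(μₐ, λₐ) ≥ w₁ kl(μ₁, m) + wₐ kl(μₐ, m) + wₐ (m - μₐ)(λₐ - λ₁) / (m (1 - m))`,
and the last term is nonnegative as soon as `μₐ ≤ m` and `λ₁ ≤ λₐ`.
-/

open Real

lemma kl_add_slope_mul_le {x y m : ℝ} (hx : x ∈ Set.Ioo (0 : ℝ) 1) (hy : y ∈ Set.Ioo (0 : ℝ) 1)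
    (hm : m ∈ Set.Ioo (0 : ℝ) 1) :
    kl x m + (m - x) / (m * (1 - m)) * (y - m) ≤ kl x y := by
  obtain ⟨hx0, hx1⟩ := hx
  obtain ⟨hy0, hy1⟩ := hy
  obtain ⟨hm0, hm1⟩ := hm
  have hx1' : 0 < 1 - x := by linarith
  have hy1' : 0 < 1 - y := by linarith
  have hm1' : 0 < 1 - m := by linarith
  have hlog : log (y / m) ≤ y / m - 1 := log_le_sub_one_of_pos (by positivity)
  have hlog' : log ((1 - y) / (1 - m)) ≤ (1 - y) / (1 - m) - 1 :=
    log_le_sub_one_of_pos (by positivity)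
  have hslope : x * (1 - y / m) + (1 - x) * (1 - (1 - y) / (1 - m))
      = (m - x) / (m * (1 - m)) * (y - m) := by
    field_simp
    ring
  have hdiff : kl x y - kl x m = x * -log (y / m) + (1 - x) * -log ((1 - y) / (1 - m)) := by
    simp only [kl, log_div hx0.ne' hy0.ne', log_div hx0.ne' hm0.ne', log_div hy0.ne' hm0.ne',
      log_div hx1'.ne' hy1'.ne', log_div hx1'.ne' hm1'.ne', log_div hy1'.ne' hm1'.ne']
    ring
  linarith [mul_le_mul_of_nonneg_left hlog hx0.le, mul_le_mul_of_nonneg_left hlog' hx1'.le]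

lemma mul_Ialpha_div_add (w1 wa x y : ℝ) (hw : w1 + wa ≠ 0) :
    (w1 + wa) * Ialpha (w1 / (w1 + wa)) x y =
      w1 * kl x ((w1 * x + wa * y) / (w1 + wa)) + wa * kl y ((w1 * x + wa * y) / (w1 + wa)) := by
  have hmean : w1 / (w1 + wa) * x + (1 - w1 / (w1 + wa)) * y = (w1 * x + wa * y) / (w1 + wa) := by
    field_simp
    ring
  simp only [Ialpha, hmean]
  field_simp
  ring

lemma weighted_kl_le_of_balanced {μ1 μa m l1 la w1 wa : ℝ}
    (hμ1 : μ1 ∈ Set.Ioo (0 : ℝ) 1) (hμa : μa ∈ Set.Ioo (0 : ℝ) 1) (hm : m ∈ Set.Ioo (0 : ℝ) 1)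
    (hl1 : l1 ∈ Set.Ioo (0 : ℝ) 1) (hla : la ∈ Set.Ioo (0 : ℝ) 1)
    (hw1 : 0 ≤ w1) (hwa : 0 ≤ wa) (hbalance : w1 * (m - μ1) + wa * (m - μa) = 0)
    (hμam : μa ≤ m) (hl : l1 ≤ la) :
    w1 * kl μ1 m + wa * kl μa m ≤ w1 * kl μ1 l1 + wa * kl μa la := by
  have hden : 0 < m * (1 - m) := mul_pos hm.1 (by linarith [hm.2])
  have htangents : w1 * ((m - μ1) / (m * (1 - m)) * (l1 - m))
      + wa * ((m - μa) / (m * (1 - m)) * (la - m)) = wa * (m - μa) * (la - l1) / (m * (1 - m)) := by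
    linear_combination (l1 - m) / (m * (1 - m)) * hbalance
  have hgap : 0 ≤ wa * (m - μa) * (la - l1) / (m * (1 - m)) :=
    div_nonneg (mul_nonneg (mul_nonneg hwa (by linarith)) (by linarith)) hden.le
  linarith [mul_le_mul_of_nonneg_left (kl_add_slope_mul_le hμ1 hl1 hm) hw1,
    mul_le_mul_of_nonneg_left (kl_add_slope_mul_le hμa hla hm) hwa]

/-- the two-dimensional transportation problem is solved by merging the two
means, yielding the value `(w₁+wₐ)·I_{w₁/(w₁+wₐ)}(μ₁,μₐ)`, attained at
`λ₁ = λₐ = (w₁μ₁+wₐμₐ)/(w₁+wₐ)`. -/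
theorem transport_two_arms (μ1 μa w1 wa : ℝ)
    (hμa : 0 < μa) (hlt : μa < μ1) (hμ1 : μ1 < 1)
    (hw1 : 0 < w1) (hwa : 0 < wa) :
    IsLeast {v : ℝ | ∃ l1 la : ℝ, l1 ∈ Set.Ioo (0 : ℝ) 1 ∧ la ∈ Set.Ioo (0 : ℝ) 1 ∧
        l1 ≤ la ∧ v = w1 * kl μ1 l1 + wa * kl μa la}
      ((w1 + wa) * Ialpha (w1 / (w1 + wa)) μ1 μa) ∧
    w1 * kl μ1 ((w1 * μ1 + wa * μa) / (w1 + wa)) +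
        wa * kl μa ((w1 * μ1 + wa * μa) / (w1 + wa)) =
      (w1 + wa) * Ialpha (w1 / (w1 + wa)) μ1 μa := by
  have hw : 0 < w1 + wa := add_pos hw1 hwa
  set m := (w1 * μ1 + wa * μa) / (w1 + wa) with hm_def
  have hμam : μa < m := by rw [lt_div_iff₀ hw]; nlinarith
  have hmμ1 : m < μ1 := by rw [div_lt_iff₀ hw]; nlinarith
  have hm : m ∈ Set.Ioo (0 : ℝ) 1 := ⟨hμa.trans hμam, hmμ1.trans hμ1⟩
  have hbalance : w1 * (m - μ1) + wa * (m - μa) = 0 := by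
    rw [hm_def]
    field_simp
    ring
  have hvalue := (mul_Ialpha_div_add w1 wa μ1 μa hw.ne').symm
  refine ⟨⟨⟨m, m, hm, hm, le_rfl, hvalue.symm⟩, ?_⟩, hvalue⟩
  rintro v ⟨l1, la, hl1, hla, hl, rfl⟩
  rw [← hvalue]
  exact weighted_kl_le_of_balanced ⟨hμa.trans hlt, hμ1⟩ ⟨hμa, hlt.trans hμ1⟩ hm hl1 hla
    hw1.le hwa.le hbalance hμam.le hl
end

section
/- Let K ≥ 2 and let μ ∈ (0,1)^K satisfy μ_1 > μ_a for all a ≥ 2. If w* ∈ Σ_K is a maximizer over Σ_K of G(w) = min_{a≠1} (w_1+w_a)·I_{w_1/(w_1+w_a)}(μ_1,μ_a), then for all a, b ∈ {2,…,K}: (w*_1 + w*_a)·I_{w*_1/(w*_1+w*_a)}(μ_1, μ_a) = (w*_1 + w*_b)·I_{w*_1/(w*_1+w*_b)}(μ_1, μ_b). -/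
/-- The objective `G(w) = min_{a ≠ 1} (w₁+wₐ)·I_{w₁/(w₁+wₐ)}(μ₁,μₐ)`, with the
convention that the `a`-th term is `0` when `w₁ + wₐ = 0`. -/
noncomputable def G (K : ℕ) (μ : Fin (K + 2) → ℝ) (w : Fin (K + 2) → ℝ) : ℝ :=
  ((Finset.univ : Finset (Fin (K + 2))).erase 0).inf' (erase_zero_nonempty K)
    (fun a => if w 0 + w a = 0 then 0
      else (w 0 + w a) * Ialpha (w 0 / (w 0 + w a)) (μ 0) (μ a))

open Finset InformationTheory

lemma kl_eq_klFun {x z : ℝ} (hz0 : z ≠ 0) (hz1 : z ≠ 1) :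
    kl x z = z * klFun (x / z) + (1 - z) * klFun ((1 - x) / (1 - z)) := by
  have : 1 - z ≠ 0 := sub_ne_zero.mpr hz1.symm
  simp only [kl, klFun_apply]
  field_simp
  ring

lemma kl_self_s3 {y : ℝ} (h0 : y ≠ 0) (h1 : y ≠ 1) : kl y y = 0 := by
  simp [kl_eq_klFun h0 h1, div_self h0, div_self (sub_ne_zero.mpr h1.symm), klFun_one]

lemma kl_pos {x z : ℝ} (hx : x ∈ Set.Icc 0 1) (hz : z ∈ Set.Ioo 0 1) (hxz : x ≠ z) :
    0 < kl x z := by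
  obtain ⟨hx0, hx1⟩ := hx
  obtain ⟨hz0, hz1⟩ := hz
  rw [kl_eq_klFun hz0.ne' hz1.ne]
  have h₁ : 0 < klFun (x / z) :=
    (klFun_nonneg (div_nonneg hx0 hz0.le)).lt_of_ne' fun h =>
      hxz ((div_eq_one_iff_eq hz0.ne').1 ((klFun_eq_zero_iff (div_nonneg hx0 hz0.le)).1 h))
  have h₂ := klFun_nonneg (div_nonneg (sub_nonneg.mpr hx1) (sub_pos.mpr hz1).le)
  have : 0 < 1 - z := sub_pos.mpr hz1
  positivity

lemma kl_nonneg_s3 {x z : ℝ} (hx : x ∈ Set.Icc 0 1) (hz : z ∈ Set.Ioo 0 1) : 0 ≤ kl x z := by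
  rcases eq_or_ne x z with rfl | hxz
  · exact (kl_self_s3 hz.1.ne' hz.2.ne).ge
  · exact (kl_pos hx hz hxz).le

lemma kl_le_mul_log_of_le_of_le {x y z : ℝ} (hy : y ∈ Set.Ioo 0 1) (hyz : y ≤ z) (hzx : z ≤ x)
    (hx : x < 1) : kl y z ≤ (1 - y) * Real.log ((1 - y) / (1 - x)) := by
  obtain ⟨hy0, hy1⟩ := hy
  have hz0 : 0 < z := hy0.trans_le hyz
  have hlog₁ : Real.log (y / z) ≤ 0 := Real.log_nonpos (by positivity) ((div_le_one hz0).2 hyz)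
  have hlog₂ : Real.log ((1 - y) / (1 - z)) ≤ Real.log ((1 - y) / (1 - x)) :=
    Real.log_le_log (div_pos (by linarith) (by linarith))
      (div_le_div_of_nonneg_left (by linarith) (by linarith) (by linarith))
  rw [kl]
  nlinarith [mul_le_mul_of_nonneg_left hlog₂ (sub_pos.mpr hy1).le]

lemma kl_eq_mul_log_sub {x z : ℝ} (hx : x ∈ Set.Ioo 0 1) (hz : z ∈ Set.Ioo 0 1) :
    kl x z = x * (Real.log x - Real.log z)
      + (1 - x) * (Real.log (1 - x) - Real.log (1 - z)) := by
  rw [kl, Real.log_div hx.1.ne' hz.1.ne', Real.log_div (sub_pos.2 hx.2).ne' (sub_pos.2 hz.2).ne']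

lemma kl_compensation {x y m z u v : ℝ} (hx : x ∈ Set.Ioo 0 1) (hy : y ∈ Set.Ioo 0 1)
    (hm : m ∈ Set.Ioo 0 1) (hz : z ∈ Set.Ioo 0 1) (hmix : u * x + v * y = (u + v) * m) :
    u * kl x z + v * kl y z = u * kl x m + v * kl y m + (u + v) * kl m z := by
  rw [kl_eq_mul_log_sub hx hz, kl_eq_mul_log_sub hy hz, kl_eq_mul_log_sub hx hm,
    kl_eq_mul_log_sub hy hm, kl_eq_mul_log_sub hm hz]
  linear_combination (Real.log m - Real.log z) * hmix
    - (Real.log (1 - m) - Real.log (1 - z)) * hmix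

noncomputable def wmean (x y u v : ℝ) : ℝ := (u * x + v * y) / (u + v)

/-- `(u + v) · I_{u/(u+v)}(x, y)` with the factor `u + v` absorbed, so that it also makes sense
(and vanishes) at `u = v = 0`. -/
noncomputable def weightedJS (x y u v : ℝ) : ℝ :=
  u * kl x (wmean x y u v) + v * kl y (wmean x y u v)

lemma ite_mul_Ialpha_eq_weightedJS {x y u v : ℝ} (hu : 0 ≤ u) (hv : 0 ≤ v) :
    (if u + v = 0 then 0 else (u + v) * Ialpha (u / (u + v)) x y) = weightedJS x y u v := by
  split_ifs with huv
  · obtain ⟨rfl, rfl⟩ := (add_eq_zero_iff_of_nonneg hu hv).1 huv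
    simp [weightedJS]
  · have hmean : u / (u + v) * x + (1 - u / (u + v)) * y = wmean x y u v := by
      rw [wmean]; field_simp; ring
    rw [Ialpha, hmean, weightedJS]
    field_simp
    ring

section wmean

variable {x y u v : ℝ}

lemma mul_add_mul_eq_mul_wmean (huv : u + v ≠ 0) : u * x + v * y = (u + v) * wmean x y u v := by
  rw [wmean, mul_div_cancel₀ _ huv]

lemma wmean_mem_Ioc (hu : 0 < u) (hv : 0 ≤ v) (hxy : y < x) : wmean x y u v ∈ Set.Ioc y x := by
  rw [wmean, Set.mem_Ioc, lt_div_iff₀ (by positivity), div_le_iff₀ (by positivity)]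
  constructor <;> nlinarith

lemma wmean_mem_Ioo (hx : x < 1) (hy : 0 < y) (hu : 0 < u) (hv : 0 ≤ v) (hxy : y < x) :
    wmean x y u v ∈ Set.Ioo 0 1 :=
  ⟨hy.trans (wmean_mem_Ioc hu hv hxy).1, (wmean_mem_Ioc hu hv hxy).2.trans_lt hx⟩

end wmean

section weightedJS

variable {x y u : ℝ}

lemma weightedJS_zero_left {v : ℝ} (hy : y ∈ Set.Ioo 0 1) : weightedJS x y 0 v = 0 := by
  rcases eq_or_ne v 0 with rfl | hv
  · simp [weightedJS]
  · have : wmean x y 0 v = y := by simp [wmean, hv]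
    rw [weightedJS, this, kl_self_s3 hy.1.ne' hy.2.ne]
    ring

lemma weightedJS_zero_right (hx : x ∈ Set.Ioo 0 1) (hu : u ≠ 0) : weightedJS x y u 0 = 0 := by
  have : wmean x y u 0 = x := by simp [wmean, hu]
  rw [weightedJS, this, kl_self_s3 hx.1.ne' hx.2.ne]
  ring

lemma weightedJS_le_add {v v' : ℝ} (hx : x ∈ Set.Ioo 0 1) (hy : y ∈ Set.Ioo 0 1) (hxy : y < x)
    (hu : 0 < u) (hv : 0 ≤ v) (hv' : 0 ≤ v') :
    weightedJS x y u v ≤ weightedJS x y u v' + (v - v') * kl y (wmean x y u v') := by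
  have hm := wmean_mem_Ioo hx.2 hy.1 hu hv hxy
  have hm' := wmean_mem_Ioo hx.2 hy.1 hu hv' hxy
  have hcomp := kl_compensation hx hy hm hm' (mul_add_mul_eq_mul_wmean (by positivity))
  have : 0 ≤ (u + v) * kl (wmean x y u v) (wmean x y u v') :=
    mul_nonneg (by positivity) (kl_nonneg_s3 (Set.Ioo_subset_Icc_self hm) hm')
  rw [weightedJS, weightedJS]
  linarith

lemma weightedJS_strictMonoOn (hx : x ∈ Set.Ioo 0 1) (hy : y ∈ Set.Ioo 0 1) (hxy : y < x)
    (hu : 0 < u) : StrictMonoOn (weightedJS x y u) (Set.Ici 0) := by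
  intro v hv v' hv' hvv'
  have hm' := wmean_mem_Ioo hx.2 hy.1 hu hv' hxy
  have hkl : 0 < kl y (wmean x y u v') :=
    kl_pos (Set.Ioo_subset_Icc_self hy) hm' (wmean_mem_Ioc hu hv' hxy).1.ne
  nlinarith [weightedJS_le_add hx hy hxy hu hv hv']

lemma weightedJS_nonneg {v : ℝ} (hx : x ∈ Set.Ioo 0 1) (hy : y ∈ Set.Ioo 0 1) (hxy : y < x)
    (hu : 0 < u) (hv : 0 ≤ v) : 0 ≤ weightedJS x y u v :=
  weightedJS_zero_right hx hu.ne' ▸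
    (weightedJS_strictMonoOn hx hy hxy hu).monotoneOn Set.self_mem_Ici hv hv

lemma weightedJS_sub_le {v ε : ℝ} (hx : x ∈ Set.Ioo 0 1) (hy : y ∈ Set.Ioo 0 1) (hxy : y < x)
    (hu : 0 < u) (hε : 0 ≤ ε) (hεv : ε ≤ v) :
    weightedJS x y u v - ε * ((1 - y) * Real.log ((1 - y) / (1 - x)))
      ≤ weightedJS x y u (v - ε) := by
  have hmean := wmean_mem_Ioc hu (sub_nonneg.2 hεv) hxy
  have hkl := kl_le_mul_log_of_le_of_le hy hmean.1.le hmean.2 hx.2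
  nlinarith [weightedJS_le_add hx hy hxy hu (hε.trans hεv) (sub_nonneg.2 hεv)]

end weightedJS

lemma const_inv_mem_simplex (n : ℕ) [NeZero n] : (fun _ => (n : ℝ)⁻¹) ∈ simplex n :=
  ⟨fun _ => by positivity, by simp⟩

def shiftMass {n : ℕ} (w : Fin n → ℝ) (a : Fin n) (S : Finset (Fin n)) (δ : ℝ) : Fin n → ℝ :=
  fun c => w c + (if c ∈ S then δ else 0) - (if c = a then #S * δ else 0)

section shiftMass

variable {n : ℕ} {w : Fin n → ℝ} {a c : Fin n} {S : Finset (Fin n)} {δ : ℝ}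

lemma shiftMass_self (haS : a ∉ S) : shiftMass w a S δ a = w a - #S * δ := by
  simp [shiftMass, haS]

lemma shiftMass_of_mem (hcS : c ∈ S) (haS : a ∉ S) : shiftMass w a S δ c = w c + δ := by
  simp [shiftMass, hcS, ne_of_mem_of_not_mem hcS haS]

lemma shiftMass_of_notMem (hcS : c ∉ S) (hca : c ≠ a) : shiftMass w a S δ c = w c := by
  simp [shiftMass, hcS, hca]

lemma shiftMass_mem_simplex (hw : w ∈ simplex n) (haS : a ∉ S) (hδ : 0 ≤ δ)
    (hδa : #S * δ ≤ w a) : shiftMass w a S δ ∈ simplex n := by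
  refine ⟨fun c => ?_, ?_⟩
  · by_cases hca : c = a
    · rw [hca, shiftMass_self haS]
      linarith
    by_cases hcS : c ∈ S
    · rw [shiftMass_of_mem hcS haS]
      linarith [hw.1 c]
    · rw [shiftMass_of_notMem hcS hca]
      exact hw.1 c
  · simp [shiftMass, sum_add_distrib, sum_sub_distrib, hw.2]

end shiftMass

section G

variable {K : ℕ} {μ w : Fin (K + 2) → ℝ} {a : Fin (K + 2)}

lemma G_eq_inf'_weightedJS (hw : ∀ c, 0 ≤ w c) :
    G K μ w = (univ.erase 0).inf' (erase_zero_nonempty K)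
      fun c => weightedJS (μ 0) (μ c) (w 0) (w c) := by
  unfold G
  congr 1
  funext c
  exact ite_mul_Ialpha_eq_weightedJS (hw 0) (hw c)

lemma G_le_weightedJS (hw : ∀ c, 0 ≤ w c) (ha : a ≠ 0) :
    G K μ w ≤ weightedJS (μ 0) (μ a) (w 0) (w a) := by
  rw [G_eq_inf'_weightedJS hw]
  exact inf'_le _ (mem_erase.2 ⟨ha, mem_univ a⟩)

lemma apply_zero_pos_of_G_pos (hμ : ∀ c, μ c ∈ Set.Ioo 0 1) (hw : ∀ c, 0 ≤ w c)
    (hG : 0 < G K μ w) : 0 < w 0 := by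
  refine (hw 0).lt_of_ne fun h => ?_
  have := G_le_weightedJS (μ := μ) hw (one_ne_zero (α := Fin (K + 2)))
  rw [← h, weightedJS_zero_left (hμ 1)] at this
  linarith

lemma G_const_pos (hμ : ∀ c, μ c ∈ Set.Ioo 0 1) (hbest : ∀ c, c ≠ 0 → μ c < μ 0) {t : ℝ}
    (ht : 0 < t) : 0 < G K μ fun _ => t := by
  rw [G_eq_inf'_weightedJS fun _ => ht.le, lt_inf'_iff]
  intro c hc
  have hmono := weightedJS_strictMonoOn (hμ 0) (hμ c) (hbest c (ne_of_mem_erase hc)) ht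
  rw [← weightedJS_zero_right (y := μ c) (hμ 0) ht.ne']
  exact hmono Set.self_mem_Ici ht.le ht

lemma G_lt_G_shiftMass (hμ : ∀ c, μ c ∈ Set.Ioo 0 1) (hbest : ∀ c, c ≠ 0 → μ c < μ 0)
    (hw : w ∈ simplex (K + 2)) (hw0 : 0 < w 0) (ha : a ≠ 0) {δ : ℝ} (hδ : 0 < δ)
    (hδa : #((univ.erase 0).erase a) * δ ≤ w a)
    (hδC : #((univ.erase 0).erase a) * δ * ((1 - μ a) * Real.log ((1 - μ a) / (1 - μ 0)))
      < weightedJS (μ 0) (μ a) (w 0) (w a) - G K μ w) :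
    G K μ w < G K μ (shiftMass w a ((univ.erase 0).erase a) δ) := by
  set S := (univ.erase 0).erase a
  have haS : a ∉ S := notMem_erase a _
  have hw' := shiftMass_mem_simplex hw haS hδ.le hδa
  have hw'0 : shiftMass w a S δ 0 = w 0 :=
    shiftMass_of_notMem (fun h => ne_of_mem_erase (mem_of_mem_erase h) rfl) ha.symm
  rw [G_eq_inf'_weightedJS hw'.1, lt_inf'_iff]
  intro c hc
  have hc0 := ne_of_mem_erase hc
  rw [hw'0]
  by_cases hca : c = a
  · subst hca
    rw [shiftMass_self haS]
    have := weightedJS_sub_le (hμ 0) (hμ c) (hbest c hc0) hw0 (by positivity) hδa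
    linarith
  · rw [shiftMass_of_mem (mem_erase.2 ⟨hca, hc⟩) haS]
    exact (G_le_weightedJS hw.1 hc0).trans_lt <| weightedJS_strictMonoOn (hμ 0) (hμ c)
      (hbest c hc0) hw0 (hw.1 c) (le_add_of_le_of_nonneg (hw.1 c) hδ.le) (lt_add_of_pos_right _ hδ)

lemma exists_G_gt_of_weightedJS_lt (hμ : ∀ c, μ c ∈ Set.Ioo 0 1)
    (hbest : ∀ c, c ≠ 0 → μ c < μ 0) (hw : w ∈ simplex (K + 2)) (hw0 : 0 < w 0) {b : Fin (K + 2)}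
    (ha : a ≠ 0) (hb : b ≠ 0)
    (hlt : weightedJS (μ 0) (μ b) (w 0) (w b) < weightedJS (μ 0) (μ a) (w 0) (w a)) :
    ∃ w' ∈ simplex (K + 2), G K μ w < G K μ w' := by
  set S := (univ.erase 0).erase a
  set C := (1 - μ a) * Real.log ((1 - μ a) / (1 - μ 0))
  have hC : 0 ≤ C := mul_nonneg (sub_pos.2 (hμ a).2).le <| Real.log_nonneg <|
    (one_le_div (sub_pos.2 (hμ 0).2)).2 (by linarith [hbest a ha])
  have hS : 0 < (#S : ℝ) := by
    have hbS : b ∈ S := mem_erase.2 ⟨fun h => hlt.ne (by rw [h]), mem_erase.2 ⟨hb, mem_univ b⟩⟩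
    exact_mod_cast card_pos.2 ⟨b, hbS⟩
  have hGa : G K μ w < weightedJS (μ 0) (μ a) (w 0) (w a) :=
    (G_le_weightedJS hw.1 hb).trans_lt hlt
  have hwa : 0 < w a := (hw.1 a).lt_of_ne fun h => by
    rw [← h, weightedJS_zero_right (hμ 0) hw0.ne'] at hlt
    linarith [weightedJS_nonneg (hμ 0) (hμ b) (hbest b hb) hw0 (hw.1 b)]
  obtain ⟨δ₁, hδ₁, hδ₁a⟩ := exists_pos_mul_lt hwa #S
  obtain ⟨δ₂, hδ₂, hδ₂C⟩ := exists_pos_mul_lt (sub_pos.2 hGa) (#S * C)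
  set δ := min δ₁ δ₂
  have hδ : 0 < δ := lt_min hδ₁ hδ₂
  have hδa : #S * δ ≤ w a :=
    (mul_le_mul_of_nonneg_left (min_le_left _ _) hS.le).trans hδ₁a.le
  have hδC : #S * δ * C < weightedJS (μ 0) (μ a) (w 0) (w a) - G K μ w :=
    calc #S * δ * C = #S * C * δ := by ring
      _ ≤ #S * C * δ₂ := mul_le_mul_of_nonneg_left (min_le_right _ _) (by positivity)
      _ < _ := hδ₂C
  exact ⟨_, shiftMass_mem_simplex hw (notMem_erase a _) hδ.le hδa,
    G_lt_G_shiftMass hμ hbest hw hw0 ha hδ hδa hδC⟩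

end G

/-- at any maximizer of `G` over the simplex, all the terms
`(w*₁+w*ₐ)·I_{w*₁/(w*₁+w*ₐ)}(μ₁,μₐ)`, `a ≠ 1`, are equal. -/
theorem all_terms_equal_at_maximizer (K : ℕ) (μ : Fin (K + 2) → ℝ)
    (hμ : ∀ a, μ a ∈ Set.Ioo (0 : ℝ) 1)
    (hbest : ∀ a : Fin (K + 2), a ≠ 0 → μ a < μ 0)
    (wstar : Fin (K + 2) → ℝ) (hws : wstar ∈ simplex (K + 2))
    (hmax : ∀ w ∈ simplex (K + 2), G K μ w ≤ G K μ wstar)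
    (a b : Fin (K + 2)) (ha : a ≠ 0) (hb : b ≠ 0) :
    (if wstar 0 + wstar a = 0 then 0
      else (wstar 0 + wstar a) * Ialpha (wstar 0 / (wstar 0 + wstar a)) (μ 0) (μ a)) =
    (if wstar 0 + wstar b = 0 then (0 : ℝ)
      else (wstar 0 + wstar b) * Ialpha (wstar 0 / (wstar 0 + wstar b)) (μ 0) (μ b)) := by
  rw [ite_mul_Ialpha_eq_weightedJS (hws.1 0) (hws.1 a),
    ite_mul_Ialpha_eq_weightedJS (hws.1 0) (hws.1 b)]
  have hG : 0 < G K μ wstar :=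
    (G_const_pos hμ hbest (by positivity)).trans_le (hmax _ (const_inv_mem_simplex (K + 2)))
  have hw0 := apply_zero_pos_of_G_pos hμ hws.1 hG
  have hle : ∀ a b, a ≠ 0 → b ≠ 0 →
      weightedJS (μ 0) (μ a) (wstar 0) (wstar a) ≤ weightedJS (μ 0) (μ b) (wstar 0) (wstar b) :=
    fun a b ha hb => not_lt.1 fun hlt =>
      let ⟨w', hw', hgt⟩ := exists_G_gt_of_weightedJS_lt hμ hbest hws hw0 ha hb hlt
      (hmax w' hw').not_gt hgt
  exact le_antisymm (hle a b ha hb) (hle b a hb ha)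
end

section
/- Let 0 < μ_a < μ_1 < 1. The function g_a : [0,∞) → ℝ defined by g_a(x) = kl(μ_1, m_a(x)) + x·kl(μ_a, m_a(x)), where m_a(x) = (μ_1 + x·μ_a)/(1+x), satisfies: g_a(0) = 0, g_a is continuous and strictly increasing on [0,∞), and g_a(x) → kl(μ_1, μ_a) as x → ∞; consequently g_a is a bijection from [0,∞) onto [0, kl(μ_1, μ_a)). -/
/-- The weighted mean `m_a(x) = (μ₁ + x μₐ)/(1+x)`. -/
noncomputable def marm (μ1 μa x : ℝ) : ℝ := (μ1 + x * μa) / (1 + x)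

/-- The function `g_a(x) = kl(μ₁, m_a(x)) + x·kl(μₐ, m_a(x))`. -/
noncomputable def garm (μ1 μa x : ℝ) : ℝ :=
  kl μ1 (marm μ1 μa x) + x * kl μa (marm μ1 μa x)

open Filter Topology Asymptotics Set

theorem StrictMonoOn.bijOn_Ici_Ico_of_tendsto {α β : Type*} [ConditionallyCompleteLinearOrder α]
    [TopologicalSpace α] [OrderTopology α] [DenselyOrdered α] [NoMaxOrder α] [LinearOrder β]
    [TopologicalSpace β] [OrderClosedTopology β] {f : α → β} {a : α} {L : β}
    (hmono : StrictMonoOn f (Ici a)) (hcont : ContinuousOn f (Ici a))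
    (hlim : Tendsto f atTop (𝓝 L)) :
    BijOn f (Ici a) (Ico (f a) L) := by
  have hle : ∀ x ∈ Ici a, f x ≤ L := fun x hx =>
    ge_of_tendsto hlim <| (eventually_ge_atTop x).mono fun z hz =>
      hmono.monotoneOn hx (le_trans hx hz) hz
  refine ⟨fun x hx => ⟨hmono.monotoneOn self_mem_Ici hx hx, ?_⟩, hmono.injOn, fun y hy => ?_⟩
  · obtain ⟨z, hxz⟩ := exists_gt x
    have hz : z ∈ Ici a := le_trans hx hxz.le
    exact (hmono hx hz hxz).trans_le (hle z hz)
  · obtain ⟨b, hyb, hab⟩ := ((hlim.eventually (eventually_gt_nhds hy.2)).and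
      (eventually_ge_atTop a)).exists
    obtain ⟨x, hx, rfl⟩ := intermediate_value_Icc hab (hcont.mono Icc_subset_Ici_self)
      ⟨hy.1, hyb.le⟩
    exact ⟨x, hx.1, rfl⟩

theorem tendsto_mul_comp_of_hasDerivAt_zero {α : Type*} {l : Filter α} {f : ℝ → ℝ}
    {u v : α → ℝ} {a L : ℝ} (hf : HasDerivAt f 0 a) (hfa : f a = 0) (hu : Tendsto u l (𝓝 a))
    (hv : Tendsto (fun x => v x * (u x - a)) l (𝓝 L)) :
    Tendsto (fun x => v x * f (u x)) l (𝓝 0) := by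
  have hfu : (fun x => f (u x)) =o[l] fun x => u x - a := by
    simpa [hfa, Function.comp_def] using (hasDerivAt_iff_isLittleO.mp hf).comp_tendsto hu
  exact (isLittleO_one_iff ℝ).mp <|
    ((isBigO_refl v l).mul_isLittleO hfu).trans_isBigO (hv.isBigO_one ℝ)

theorem kl_self_s4 {p : ℝ} (hp : 0 < p) (hp1 : p < 1) : kl p p = 0 := by
  simp [kl, div_self hp.ne', div_self (sub_ne_zero.mpr hp1.ne')]

theorem kl_pos_s4 {p q : ℝ} (hp : 0 < p) (hp1 : p < 1) (hq : 0 < q) (hq1 : q < 1) (hpq : p ≠ q) :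
    0 < kl p q := by
  have hp1' : 0 < 1 - p := sub_pos.mpr hp1
  have hq1' : 0 < 1 - q := sub_pos.mpr hq1
  have h₁ : p * Real.log (q / p) < q - p := by
    have hqp : q / p ≠ 1 := by rwa [ne_eq, div_eq_one_iff_eq hp.ne', eq_comm]
    calc p * Real.log (q / p) < p * (q / p - 1) :=
          mul_lt_mul_of_pos_left (Real.log_lt_sub_one_of_pos (div_pos hq hp) hqp) hp
      _ = q - p := by field_simp
  have h₂ : (1 - p) * Real.log ((1 - q) / (1 - p)) ≤ p - q := by
    calc (1 - p) * Real.log ((1 - q) / (1 - p)) ≤ (1 - p) * ((1 - q) / (1 - p) - 1) :=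
          mul_le_mul_of_nonneg_left (Real.log_le_sub_one_of_pos (div_pos hq1' hp1')) hp1'.le
      _ = p - q := by field_simp; ring
  rw [kl, ← inv_div q, ← inv_div (1 - q), Real.log_inv, Real.log_inv]
  linarith

theorem hasDerivAt_kl_right {p y : ℝ} (hp : 0 < p) (hp1 : p < 1) (hy : 0 < y) (hy1 : y < 1) :
    HasDerivAt (kl p) (-(p / y) + (1 - p) / (1 - y)) y := by
  have h := (((Real.hasDerivAt_log hy.ne').const_mul p).const_sub (p * Real.log p)).add
    ((((hasDerivAt_id y).const_sub 1).log (sub_pos.mpr hy1).ne').const_mul (1 - p)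
      |>.const_sub ((1 - p) * Real.log (1 - p)))
  refine (h.congr_deriv ?_).congr_of_eventuallyEq ?_
  · simp only [id]
    field_simp
  · filter_upwards [isOpen_Ioo.mem_nhds ⟨hy, hy1⟩] with z hz
    rw [kl, Real.log_div hp.ne' hz.1.ne',
      Real.log_div (sub_pos.mpr hp1).ne' (sub_pos.mpr hz.2).ne']
    simp only [Pi.add_apply, id]
    ring

theorem hasDerivAt_kl_right_self {p : ℝ} (hp : 0 < p) (hp1 : p < 1) : HasDerivAt (kl p) 0 p := by
  simpa [div_self hp.ne', div_self (sub_pos.mpr hp1).ne'] using hasDerivAt_kl_right hp hp1 hp hp1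

section marm

variable {μ1 μa x : ℝ}

theorem one_add_mul_marm_sub (hx : 1 + x ≠ 0) : (1 + x) * (marm μ1 μa x - μa) = μ1 - μa := by
  rw [marm]
  field_simp
  ring

theorem marm_mem_Ioc (hlt : μa < μ1) (hx : 0 ≤ x) : marm μ1 μa x ∈ Ioc μa μ1 := by
  have hx1 : 0 < 1 + x := by linarith
  rw [marm, mem_Ioc, lt_div_iff₀ hx1, div_le_iff₀ hx1]
  constructor <;> nlinarith

theorem hasDerivAt_marm (hx : 1 + x ≠ 0) :
    HasDerivAt (marm μ1 μa) ((μa - μ1) / (1 + x) ^ 2) x := by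
  have h := (((hasDerivAt_id x).mul_const μa).const_add μ1).div
    ((hasDerivAt_id x).const_add 1) hx
  refine h.congr_deriv ?_
  simp only [id]
  ring

theorem tendsto_marm_atTop : Tendsto (marm μ1 μa) atTop (𝓝 μa) := by
  have h : Tendsto (fun x => μa + (μ1 - μa) / (1 + x)) atTop (𝓝 (μa + 0)) :=
    tendsto_const_nhds.add <| tendsto_const_nhds.div_atTop <|
      tendsto_atTop_add_const_left _ 1 tendsto_id
  rw [add_zero] at h
  refine h.congr' ?_
  filter_upwards [eventually_gt_atTop (-1)] with x hx
  have hx1 : 1 + x ≠ 0 := by linarith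
  rw [← one_add_mul_marm_sub hx1, mul_div_cancel_left₀ _ hx1]
  ring

end marm

section garm

variable {μ1 μa : ℝ}

theorem garm_zero (hμ1 : 0 < μ1) (h1 : μ1 < 1) : garm μ1 μa 0 = 0 := by
  simp [garm, marm, kl_self_s4 hμ1 h1]

theorem hasDerivAt_garm {x : ℝ} (h0 : 0 < μa) (hlt : μa < μ1) (h1 : μ1 < 1) (hx : 0 ≤ x) :
    HasDerivAt (garm μ1 μa) (kl μa (marm μ1 μa x)) x := by
  have hx1 : 1 + x ≠ 0 := by linarith
  obtain ⟨hma, hm1⟩ := marm_mem_Ioc hlt hx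
  set m := marm μ1 μa x with hm
  have hm0 : 0 < m := h0.trans hma
  have hm1' : m < 1 := hm1.trans_lt h1
  have hk1 := (hasDerivAt_kl_right (h0.trans hlt) h1 hm0 hm1').comp x (hasDerivAt_marm hx1)
  have hk2 := (hasDerivAt_kl_right h0 (hlt.trans h1) hm0 hm1').comp x (hasDerivAt_marm hx1)
  have hcrit : -(μ1 / m) + (1 - μ1) / (1 - m) + x * (-(μa / m) + (1 - μa) / (1 - m)) = 0 := by
    have hsum : m * (1 + x) = μ1 + x * μa := by rw [hm, marm, div_mul_cancel₀ _ hx1]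
    field_simp [(sub_pos.mpr hm1').ne']
    linear_combination hsum
  refine (hk1.add ((hasDerivAt_id x).mul hk2)).congr_deriv ?_
  simp only [id, Function.comp_apply, ← hm]
  linear_combination ((μa - μ1) / (1 + x) ^ 2) * hcrit

theorem continuousOn_garm (h0 : 0 < μa) (hlt : μa < μ1) (h1 : μ1 < 1) :
    ContinuousOn (garm μ1 μa) (Ici 0) := fun _ hx =>
  (hasDerivAt_garm h0 hlt h1 hx).continuousAt.continuousWithinAt

theorem strictMonoOn_garm (h0 : 0 < μa) (hlt : μa < μ1) (h1 : μ1 < 1) :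
    StrictMonoOn (garm μ1 μa) (Ici 0) := by
  refine strictMonoOn_of_hasDerivWithinAt_pos (convex_Ici 0) (continuousOn_garm h0 hlt h1)
    (fun x hx => (hasDerivAt_garm h0 hlt h1 (interior_subset hx)).hasDerivWithinAt) ?_
  intro x hx
  obtain ⟨hma, hm1⟩ := marm_mem_Ioc hlt (interior_subset hx : (0 : ℝ) ≤ x)
  exact kl_pos_s4 h0 (hlt.trans h1) (h0.trans hma) (hm1.trans_lt h1) hma.ne

theorem tendsto_garm_atTop (h0 : 0 < μa) (hlt : μa < μ1) (h1 : μ1 < 1) :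
    Tendsto (garm μ1 μa) atTop (𝓝 (kl μ1 μa)) := by
  have hm : Tendsto (marm μ1 μa) atTop (𝓝 μa) := tendsto_marm_atTop
  have hfirst : Tendsto (fun x => kl μ1 (marm μ1 μa x)) atTop (𝓝 (kl μ1 μa)) :=
    (hasDerivAt_kl_right (h0.trans hlt) h1 h0 (hlt.trans h1)).continuousAt.tendsto.comp hm
  have hscaled : Tendsto (fun x => x * (marm μ1 μa x - μa)) atTop (𝓝 (μ1 - μa - 0)) := by
    refine (tendsto_const_nhds.sub (tendsto_sub_nhds_zero_iff.mpr hm)).congr' ?_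
    filter_upwards [eventually_gt_atTop (-1)] with x hx
    linear_combination -one_add_mul_marm_sub (μ1 := μ1) (μa := μa) (by linarith : 1 + x ≠ 0)
  have hsecond : Tendsto (fun x => x * kl μa (marm μ1 μa x)) atTop (𝓝 0) :=
    tendsto_mul_comp_of_hasDerivAt_zero (hasDerivAt_kl_right_self h0 (hlt.trans h1))
      (kl_self_s4 h0 (hlt.trans h1)) hm hscaled
  rw [← add_zero (kl μ1 μa)]
  exact hfirst.add hsecond

end garm

/-- `g_a` vanishes at `0`, is continuous and strictly increasing on `[0,∞)`,
tends to `kl(μ₁,μₐ)` at infinity, and is a bijection from `[0,∞)` onto `[0, kl(μ₁,μₐ))`. -/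
theorem garm_properties (μ1 μa : ℝ) (h0 : 0 < μa) (hlt : μa < μ1) (h1 : μ1 < 1) :
    garm μ1 μa 0 = 0 ∧
    ContinuousOn (garm μ1 μa) (Set.Ici 0) ∧
    StrictMonoOn (garm μ1 μa) (Set.Ici 0) ∧
    Filter.Tendsto (garm μ1 μa) Filter.atTop (nhds (kl μ1 μa)) ∧
    Set.BijOn (garm μ1 μa) (Set.Ici 0) (Set.Ico 0 (kl μ1 μa)) := by
  have hzero := garm_zero (μa := μa) (h0.trans hlt) h1
  have hcont := continuousOn_garm h0 hlt h1
  have hmono := strictMonoOn_garm h0 hlt h1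
  have hlim := tendsto_garm_atTop h0 hlt h1
  refine ⟨hzero, hcont, hmono, hlim, ?_⟩
  simpa only [hzero] using hmono.bijOn_Ici_Ico_of_tendsto hcont hlim
end

section
/- Let K ≥ 2, σ > 0, and μ ∈ ℝ^K with μ_1 > μ_a for all a ≥ 2. Set Δ_a = μ_1 − μ_a for a ≥ 2 and Δ_1 = Δ_2, where Δ_2 = min_{a≥2} Δ_a. Define S = sup_{w ∈ Σ_K} min_{a≠1} (w_1·w_a/(w_1+w_a))·Δ_a²/(2σ²), with the convention that the a-th term equals 0 when w_1 + w_a = 0. Then S ≥ 1 / (2·Σ_{a=1}^K 2σ²/Δ_a²); that is, in the Gaussian case the characteristic time satisfies T*(μ) = 1/S ≤ 2·Σ_{a=1}^K 2σ²/Δ_a². -/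
lemma aux_ineq (A B T d s : ℝ) (hA : 0 < A) (hB : 0 < B) (hT : 0 < T) (hs : 0 < s)
    (hBA : B ≤ A) (hd : B * d = s) :
    1 / (2 * T) ≤ (A / T) * (B / T) / ((A / T) + (B / T)) * d / s := by
  have hd0 : 0 < d := by
    rcases lt_trichotomy d 0 with h | h | h
    · nlinarith
    · rw [h, mul_zero] at hd; linarith
    · exact h
  have h1 : (A / T) * (B / T) / ((A / T) + (B / T)) = A * B / (T * (A + B)) := by
    field_simp
  rw [h1, div_mul_eq_mul_div, div_div, div_le_div_iff₀ (by positivity) (by positivity)]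
  have h2 : A * B * d = A * s := by rw [mul_assoc, hd]
  rw [h2]
  nlinarith [mul_pos hT hs, mul_pos hA (mul_pos hT hs)]

/-- in the Gaussian case the characteristic quantity
`S = sup_w min_{a≠1} (w₁wₐ/(w₁+wₐ))·Δₐ²/(2σ²)` satisfies
`S ≥ 1/(2·Σₐ 2σ²/Δₐ²)`, i.e. `T*(μ) = 1/S ≤ 2·Σₐ 2σ²/Δₐ²`.
Arm `1` of the paper is index `0`; `Δ₁ = Δ₂ = minₐ Δₐ`. -/
theorem gaussian_upper_bound (K : ℕ) (σ : ℝ) (hσ : 0 < σ) (μ : Fin (K + 2) → ℝ)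
    (hbest : ∀ a : Fin (K + 2), a ≠ 0 → μ a < μ 0) :
    let Δ : Fin (K + 2) → ℝ := fun a =>
      if a = 0 then
        ((Finset.univ : Finset (Fin (K + 2))).erase 0).inf' (erase_zero_nonempty K)
          (fun b => μ 0 - μ b)
      else μ 0 - μ a
    let S : ℝ := ⨆ w : simplex (K + 2),
      ((Finset.univ : Finset (Fin (K + 2))).erase 0).inf' (erase_zero_nonempty K)
        (fun a => if (w : Fin (K + 2) → ℝ) 0 + (w : Fin (K + 2) → ℝ) a = 0 then 0
          else ((w : Fin (K + 2) → ℝ) 0 * (w : Fin (K + 2) → ℝ) a /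
              ((w : Fin (K + 2) → ℝ) 0 + (w : Fin (K + 2) → ℝ) a)) *
            (Δ a) ^ 2 / (2 * σ ^ 2))
    1 / (2 * ∑ a, 2 * σ ^ 2 / (Δ a) ^ 2) ≤ S := by
  intro Δ S
  have hΔpos : ∀ a, 0 < Δ a := by
    intro a
    by_cases ha : a = 0
    · subst ha
      simp only [Δ, if_pos rfl]
      rw [Finset.lt_inf'_iff]
      intro b hb
      have hb0 : b ≠ 0 := (Finset.mem_erase.mp hb).1
      linarith [hbest b hb0]
    · simp only [Δ, if_neg ha]
      linarith [hbest a ha]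
  have hΔ0le : ∀ a : Fin (K + 2), a ≠ 0 → Δ 0 ≤ Δ a := by
    intro a ha
    simp only [Δ, if_pos rfl, if_neg ha]
    exact Finset.inf'_le _ (Finset.mem_erase.mpr ⟨ha, Finset.mem_univ _⟩)
  set c : Fin (K + 2) → ℝ := fun a => 2 * σ ^ 2 / (Δ a) ^ 2 with hc_def
  have hc : ∀ a, 0 < c a := fun a => div_pos (by positivity) (pow_pos (hΔpos a) 2)
  set T : ℝ := ∑ a, c a with hT_def
  have hT : 0 < T := Finset.sum_pos (fun a _ => hc a) Finset.univ_nonempty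
  have hca : ∀ a : Fin (K + 2), a ≠ 0 → c a ≤ c 0 := by
    intro a ha
    apply div_le_div_of_nonneg_left (by positivity) (pow_pos (hΔpos 0) 2)
    exact pow_le_pow_left₀ (hΔpos 0).le (hΔ0le a ha) 2
  set w : Fin (K + 2) → ℝ := fun a => c a / T with hw_def
  have hwpos : ∀ a, 0 < w a := fun a => div_pos (hc a) hT
  have hw : w ∈ simplex (K + 2) := by
    constructor
    · exact fun a => (hwpos a).le
    · simp only [hw_def, ← Finset.sum_div]
      exact div_self hT.ne'
  have hca2 : ∀ a, c a * (Δ a) ^ 2 = 2 * σ ^ 2 := by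
    intro a
    simp only [hc_def]
    exact div_mul_cancel₀ _ (pow_pos (hΔpos a) 2).ne'
  have hval : ∀ a : Fin (K + 2), a ≠ 0 →
      1 / (2 * T) ≤ (if w 0 + w a = 0 then 0
        else (w 0 * w a / (w 0 + w a)) * (Δ a) ^ 2 / (2 * σ ^ 2)) := by
    intro a ha
    have hsum : w 0 + w a ≠ 0 := (add_pos (hwpos 0) (hwpos a)).ne'
    rw [if_neg hsum]
    have : w 0 = c 0 / T := rfl
    rw [this]
    have : w a = c a / T := rfl
    rw [this]
    exact aux_ineq (c 0) (c a) T ((Δ a) ^ 2) (2 * σ ^ 2) (hc 0) (hc a) hT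
      (by positivity) (hca a ha) (hca2 a)
  have hbdd : BddAbove (Set.range (fun w : simplex (K + 2) =>
      ((Finset.univ : Finset (Fin (K + 2))).erase 0).inf' (erase_zero_nonempty K)
        (fun a => if (w : Fin (K + 2) → ℝ) 0 + (w : Fin (K + 2) → ℝ) a = 0 then 0
          else ((w : Fin (K + 2) → ℝ) 0 * (w : Fin (K + 2) → ℝ) a /
              ((w : Fin (K + 2) → ℝ) 0 + (w : Fin (K + 2) → ℝ) a)) *
            (Δ a) ^ 2 / (2 * σ ^ 2)))) := by
    refine ⟨(Δ 1) ^ 2 / (2 * σ ^ 2), ?_⟩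
    rintro x ⟨v, rfl⟩
    obtain ⟨hv1, hv2⟩ := v.2
    have hvle1 : ∀ a, (v : Fin (K + 2) → ℝ) a ≤ 1 := by
      intro a
      calc (v : Fin (K + 2) → ℝ) a ≤ ∑ b, (v : Fin (K + 2) → ℝ) b :=
        Finset.single_le_sum (fun b _ => hv1 b) (Finset.mem_univ a)
      _ = 1 := hv2
    have hmem : (1 : Fin (K + 2)) ∈ (Finset.univ : Finset (Fin (K + 2))).erase 0 :=
      Finset.mem_erase.mpr ⟨by simp [Fin.ext_iff], Finset.mem_univ _⟩
    refine le_trans (Finset.inf'_le _ hmem) ?_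
    · set v0 := (v : Fin (K + 2) → ℝ) 0 with hv0_def
      set v1 := (v : Fin (K + 2) → ℝ) 1 with hv1_def
      by_cases hz : v0 + v1 = 0
      · rw [if_pos hz]
        positivity
      · rw [if_neg hz]
        have hpos : 0 < v0 + v1 :=
          lt_of_le_of_ne (add_nonneg (hv1 0) (hv1 1)) (Ne.symm hz)
        have hr : v0 * v1 / (v0 + v1) ≤ 1 := by
          rw [div_le_one hpos]
          nlinarith [hv1 0, hv1 1, hvle1 0, hvle1 1]
        calc v0 * v1 / (v0 + v1) * Δ 1 ^ 2 / (2 * σ ^ 2)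
            ≤ 1 * Δ 1 ^ 2 / (2 * σ ^ 2) := by
              apply div_le_div_of_nonneg_right ?_ (by positivity)
              exact mul_le_mul_of_nonneg_right hr (by positivity)
          _ = Δ 1 ^ 2 / (2 * σ ^ 2) := by ring
  refine le_trans ?_ (le_ciSup hbdd ⟨w, hw⟩)
  rw [Finset.le_inf'_iff]
  intro a ha
  exact hval a (Finset.mem_erase.mp ha).1
end

section
/- Let K ≥ 2, σ > 0, and μ ∈ ℝ^K with μ_1 > μ_a for all a ≥ 2. Set Δ_a = μ_1 − μ_a for a ≥ 2 and Δ_1 = Δ_2, where Δ_2 = min_{a≥2} Δ_a. Define S = sup_{w ∈ Σ_K} min_{a≠1} (w_1·w_a/(w_1+w_a))·Δ_a²/(2σ²), with the convention that the a-th term equals 0 when w_1 + w_a = 0. Then S ≤ 1 / (Σ_{a=1}^K 2σ²/Δ_a²); that is, in the Gaussian case the characteristic time satisfies T*(μ) = 1/S ≥ Σ_{a=1}^K 2σ²/Δ_a². -/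
/-- in the Gaussian case the characteristic quantity
`S = sup_w min_{a≠1} (w₁wₐ/(w₁+wₐ))·Δₐ²/(2σ²)` satisfies
`S ≤ 1/(Σₐ 2σ²/Δₐ²)`, i.e. `T*(μ) = 1/S ≥ Σₐ 2σ²/Δₐ²`.
Arm `1` of the paper is index `0`; `Δ₁ = Δ₂ = minₐ Δₐ`. -/
theorem gaussian_lower_bound (K : ℕ) (σ : ℝ) (hσ : 0 < σ) (μ : Fin (K + 2) → ℝ)
    (hbest : ∀ a : Fin (K + 2), a ≠ 0 → μ a < μ 0) :
    let Δ : Fin (K + 2) → ℝ := fun a =>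
      if a = 0 then
        ((Finset.univ : Finset (Fin (K + 2))).erase 0).inf' (erase_zero_nonempty K)
          (fun b => μ 0 - μ b)
      else μ 0 - μ a
    let S : ℝ := ⨆ w : simplex (K + 2),
      ((Finset.univ : Finset (Fin (K + 2))).erase 0).inf' (erase_zero_nonempty K)
        (fun a => if (w : Fin (K + 2) → ℝ) 0 + (w : Fin (K + 2) → ℝ) a = 0 then 0
          else ((w : Fin (K + 2) → ℝ) 0 * (w : Fin (K + 2) → ℝ) a /
              ((w : Fin (K + 2) → ℝ) 0 + (w : Fin (K + 2) → ℝ) a)) *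
            (Δ a) ^ 2 / (2 * σ ^ 2))
    S ≤ 1 / (∑ a, 2 * σ ^ 2 / (Δ a) ^ 2) := by
  intro Δ S
  have aux : ∀ (x d s : ℝ), d ≠ 0 → s ≠ 0 → x * d / s * (s / d) = x := by
    intros x d s hd hs; field_simp
  obtain ⟨astar, hastar, hΔ0⟩ := Finset.exists_mem_eq_inf'
    (erase_zero_nonempty K) (fun b => μ 0 - μ b)
  have hastar0 : astar ≠ 0 := (Finset.mem_erase.mp hastar).1
  have hΔstar : Δ 0 = Δ astar := by
    simp only [Δ, if_pos rfl, if_neg hastar0]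
    exact hΔ0
  have hΔpos : ∀ a, 0 < Δ a := by
    intro a
    by_cases h : a = 0
    · subst h
      rw [hΔstar]
      simp only [Δ, if_neg hastar0]
      linarith [hbest astar hastar0]
    · simp only [Δ, if_neg h]
      linarith [hbest a h]
  clear_value Δ
  set C := ∑ a, 2 * σ ^ 2 / (Δ a) ^ 2 with hC
  have hCpos : 0 < C :=
    Finset.sum_pos (fun a _ => by have := hΔpos a; positivity) ⟨0, Finset.mem_univ _⟩
  refine Real.iSup_le (fun w => ?_) (by positivity)
  obtain ⟨hnn, hsum⟩ := w.2
  set v : Fin (K + 2) → ℝ := (w : Fin (K + 2) → ℝ) with hv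
  set g : Fin (K + 2) → ℝ := fun a => if v 0 + v a = 0 then 0
    else (v 0 * v a / (v 0 + v a)) * (Δ a) ^ 2 / (2 * σ ^ 2) with hg
  show ((Finset.univ : Finset (Fin (K + 2))).erase 0).inf' (erase_zero_nonempty K) g ≤ 1 / C
  set m := ((Finset.univ : Finset (Fin (K + 2))).erase 0).inf' (erase_zero_nonempty K) g with hm
  by_cases hdeg : ∃ a ∈ (Finset.univ : Finset (Fin (K + 2))).erase 0, v 0 + v a = 0
  · obtain ⟨a, ha, hza⟩ := hdeg
    have h0 : g a = 0 := by
      simp only [hg]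
      rw [if_pos hza]
    have h1 : m ≤ 0 := (Finset.inf'_le g ha).trans_eq h0
    have h2 : (0 : ℝ) ≤ 1 / C := by positivity
    linarith
  · push_neg at hdeg
    have hpos : ∀ a ∈ (Finset.univ : Finset (Fin (K + 2))).erase 0, 0 < v 0 + v a :=
      fun a ha => (add_nonneg (hnn 0) (hnn a)).lt_of_ne (Ne.symm (hdeg a ha))
    have hfrac_le : ∀ a ∈ (Finset.univ : Finset (Fin (K + 2))).erase 0,
        m * (2 * σ ^ 2 / (Δ a) ^ 2) ≤ v 0 * v a / (v 0 + v a) := by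
      intro a ha
      have h1 : m ≤ (v 0 * v a / (v 0 + v a)) * (Δ a) ^ 2 / (2 * σ ^ 2) := by
        have hga : g a = (v 0 * v a / (v 0 + v a)) * (Δ a) ^ 2 / (2 * σ ^ 2) := by
          simp only [hg]
          rw [if_neg (hdeg a ha)]
        exact (Finset.inf'_le g ha).trans_eq hga
      have hΔa := hΔpos a
      have hσ2 : (0 : ℝ) < 2 * σ ^ 2 := by positivity
      calc m * (2 * σ ^ 2 / (Δ a) ^ 2)
          ≤ ((v 0 * v a / (v 0 + v a)) * (Δ a) ^ 2 / (2 * σ ^ 2)) * (2 * σ ^ 2 / (Δ a) ^ 2) :=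
            mul_le_mul_of_nonneg_right h1 (by positivity)
        _ = v 0 * v a / (v 0 + v a) := aux _ _ _ (by positivity) (by positivity)
    have hle_v : ∀ a ∈ (Finset.univ : Finset (Fin (K + 2))).erase 0,
        m * (2 * σ ^ 2 / (Δ a) ^ 2) ≤ v a := by
      intro a ha
      refine (hfrac_le a ha).trans ?_
      rw [div_le_iff₀ (hpos a ha)]
      nlinarith [sq_nonneg (v a), hnn 0, hnn a]
    have hle_v0 : m * (2 * σ ^ 2 / (Δ 0) ^ 2) ≤ v 0 := by
      rw [hΔstar]
      refine (hfrac_le astar hastar).trans ?_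
      rw [div_le_iff₀ (hpos astar hastar)]
      nlinarith [sq_nonneg (v 0), hnn 0, hnn astar]
    have hmC : m * C ≤ 1 := by
      have hsplit : ∑ a ∈ (Finset.univ : Finset (Fin (K + 2))).erase 0, v a + v 0 = 1 := by
        rw [Finset.sum_erase_add _ _ (Finset.mem_univ 0)]
        exact hsum
      have hCsplit : m * C = m * (2 * σ ^ 2 / (Δ 0) ^ 2) +
          ∑ a ∈ (Finset.univ : Finset (Fin (K + 2))).erase 0, m * (2 * σ ^ 2 / (Δ a) ^ 2) := by
        rw [hC, Finset.mul_sum, ← Finset.sum_erase_add _ _ (Finset.mem_univ 0)]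
        ring
      rw [hCsplit]
      have hsum2 : ∑ a ∈ (Finset.univ : Finset (Fin (K + 2))).erase 0,
          m * (2 * σ ^ 2 / (Δ a) ^ 2) ≤
          ∑ a ∈ (Finset.univ : Finset (Fin (K + 2))).erase 0, v a :=
        Finset.sum_le_sum hle_v
      linarith
    rw [le_div_iff₀ hCpos]
    exact hmC
end

section
/- Let K ≥ 1 and n ≥ 1 be integers, and let p(1),…,p(n) ∈ Σ_K. For k ≤ n set P(k) = p(1)+⋯+p(k). Define N(0) = 0 ∈ ℝ^K and, for k = 0,…,n−1, pick I_{k+1} ∈ argmax_{1 ≤ i ≤ K} [P_i(k+1) − N_i(k)] and set N(k+1) = N(k) + δ_{I_{k+1}}, where δ_i is the i-th standard basis vector. Then max_{1 ≤ i ≤ K} |N_i(n) − P_i(n)| ≤ K − 1. -/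
open Finset

theorem nonneg_of_forall_le_of_sum_nonneg {ι M : Type*} [Fintype ι] [AddCommMonoid M]
    [LinearOrder M] [IsOrderedAddMonoid M] {x : ι → M} {a : ι}
    (hmax : ∀ j, x j ≤ x a) (hsum : 0 ≤ ∑ j, x j) : 0 ≤ x a := by
  by_contra! hneg
  have : Nonempty ι := ⟨a⟩
  have hneg_sum : ∑ j, x j < 0 :=
    (univ.sum_le_card_nsmul x (x a) fun j _ => hmax j).trans_lt
      (nsmul_neg hneg Fintype.card_ne_zero)
  exact hneg_sum.not_ge hsum

theorem abs_le_card_sub_one_of_sum_eq_zero {ι R : Type*} [Fintype ι] [DecidableEq ι] [Ring R]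
    [LinearOrder R] [IsStrictOrderedRing R] {x : ι → R}
    (hsum : ∑ j, x j = 0) (hle : ∀ j, x j ≤ 1) (i : ι) :
    |x i| ≤ Fintype.card ι - 1 := by
  have hcard : (Fintype.card ι : R) - 1 = (univ.erase i).card := by
    rw [← card_univ, ← card_erase_add_one (mem_univ i), Nat.cast_succ, add_sub_cancel_right]
  have hxi : x i = -∑ j ∈ univ.erase i, x j :=
    eq_neg_of_add_eq_zero_left ((add_sum_erase _ x (mem_univ i)).trans hsum)
  have hrest : ∑ j ∈ univ.erase i, x j ≤ (univ.erase i).card := by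
    simpa using (univ.erase i).sum_le_card_nsmul x 1 fun j _ => hle j
  rw [hcard, abs_le]
  refine ⟨by rw [hxi, neg_le_neg_iff]; exact hrest, ?_⟩
  rcases (univ.erase i).eq_empty_or_nonempty with hempty | hne
  · simp [hxi, hempty]
  · exact (hle i).trans (by exact_mod_cast hne.card_pos)

section Tracking

variable {K n : ℕ} {p : ℕ → Fin K → ℝ} {N : ℕ → Fin K → ℝ} {I : ℕ → Fin K}

theorem sum_sum_range_eq_of_mem_simplex (hp : ∀ k < n, p k ∈ simplex K) {k : ℕ} (hk : k ≤ n) :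
    ∑ i, ∑ s ∈ range k, p s i = k := by
  rw [sum_comm, sum_congr rfl fun s hs => (hp s ((mem_range.mp hs).trans_le hk)).2]
  simp

theorem sum_count_eq (hN0 : ∀ i, N 0 i = 0)
    (hrec : ∀ k < n, ∀ i, N (k + 1) i = N k i + if I k = i then 1 else 0) :
    ∀ k ≤ n, ∑ i, N k i = k := by
  intro k hk
  induction k with
  | zero => simp [hN0]
  | succ k ih =>
    have hkn : k < n := hk
    rw [sum_congr rfl fun i _ => hrec k hkn i, sum_add_distrib, ih hkn.le, sum_ite_eq]
    simp

theorem sub_sum_range_le_one_of_greedy (hp : ∀ k < n, p k ∈ simplex K)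
    (hN0 : ∀ i, N 0 i = 0)
    (hargmax : ∀ k < n, ∀ j, (∑ s ∈ range (k + 1), p s j) - N k j ≤
      (∑ s ∈ range (k + 1), p s (I k)) - N k (I k))
    (hrec : ∀ k < n, ∀ i, N (k + 1) i = N k i + if I k = i then 1 else 0) :
    ∀ k ≤ n, ∀ i, N k i - ∑ s ∈ range k, p s i ≤ 1 := by
  intro k hk
  induction k with
  | zero => simp [hN0]
  | succ k ih =>
    have hkn : k < n := hk
    intro i
    rw [hrec k hkn i, sum_range_succ]
    by_cases hi : I k = i
    · subst hi
      have hgap : 0 ≤ (∑ s ∈ range (k + 1), p s (I k)) - N k (I k) := by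
        refine nonneg_of_forall_le_of_sum_nonneg
          (x := fun j => (∑ s ∈ range (k + 1), p s j) - N k j) (hargmax k hkn) ?_
        rw [sum_sub_distrib, sum_sum_range_eq_of_mem_simplex hp hk,
          sum_count_eq hN0 hrec k hkn.le]
        push_cast
        linarith
      rw [sum_range_succ] at hgap
      simp only [if_true]
      linarith
    · simp only [hi, if_false]
      linarith [ih hkn.le i, (hp k hkn).1 i]

end Tracking

theorem c_tracking_general (K n : ℕ)
    (p : ℕ → Fin K → ℝ) (hp : ∀ k < n, p k ∈ simplex K)
    (N : ℕ → Fin K → ℝ) (hN0 : ∀ i, N 0 i = 0)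
    (I : ℕ → Fin K)
    (hargmax : ∀ k < n, ∀ j : Fin K,
      (∑ s ∈ Finset.range (k + 1), p s j) - N k j ≤
        (∑ s ∈ Finset.range (k + 1), p s (I k)) - N k (I k))
    (hrec : ∀ k < n, ∀ i : Fin K, N (k + 1) i = N k i + if I k = i then 1 else 0) :
    ∀ i : Fin K, |N n i - ∑ s ∈ Finset.range n, p s i| ≤ (K : ℝ) - 1 := by
  intro i
  have hsum : ∑ j, (N n j - ∑ s ∈ range n, p s j) = 0 := by
    rw [sum_sub_distrib, sum_count_eq hN0 hrec n le_rfl,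
      sum_sum_range_eq_of_mem_simplex hp le_rfl, sub_self]
  simpa using abs_le_card_sub_one_of_sum_eq_zero hsum
    (sub_sum_range_le_one_of_greedy hp hN0 hargmax hrec n le_rfl) i

/-- the deterministic C-Tracking lemma. The greedy counting sequence `N`
(incrementing at each step a coordinate maximizing `P_i(k+1) − N_i(k)`) tracks the
cumulated sums `P(k) = p(1) + ⋯ + p(k)` of probability vectors within `K − 1`.
Here `p k` stands for the paper's `p(k+1)`, so `P n i = ∑_{s<n} p s i`. -/
theorem c_tracking (K n : ℕ) (hK : 1 ≤ K) (hn : 1 ≤ n)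
    (p : ℕ → Fin K → ℝ) (hp : ∀ k < n, p k ∈ simplex K)
    (N : ℕ → Fin K → ℝ) (hN0 : ∀ i, N 0 i = 0)
    (I : ℕ → Fin K)
    (hargmax : ∀ k < n, ∀ j : Fin K,
      (∑ s ∈ Finset.range (k + 1), p s j) - N k j ≤
        (∑ s ∈ Finset.range (k + 1), p s (I k)) - N k (I k))
    (hrec : ∀ k < n, ∀ i : Fin K, N (k + 1) i = N k i + if I k = i then 1 else 0) :
    ∀ i : Fin K, |N n i - ∑ s ∈ Finset.range n, p s i| ≤ (K : ℝ) - 1 :=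
  c_tracking_general K n p hp N hN0 I hargmax hrec
end

section
/- Let α ∈ [1, e/2] and let c_1, c_2 > 0 satisfy c_2 ≥ e·c_1^α. Then the real number x = (α/c_1)·[log(c_2·e/c_1^α) + log log(c_2/c_1^α)] satisfies c_1·x ≥ log(c_2·x^α). -/
/-- the technical inversion lemma. For `α ∈ [1, e/2]`, `c₁, c₂ > 0`
with `c₂ ≥ e·c₁^α`, the value
`x = (α/c₁)·[log(c₂e/c₁^α) + log log(c₂/c₁^α)]` satisfies `c₁·x ≥ log(c₂·x^α)`. -/
theorem technical_inversion (α c1 c2 : ℝ)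
    (hα : α ∈ Set.Icc 1 (Real.exp 1 / 2))
    (hc1 : 0 < c1) (hc2 : 0 < c2)
    (h : Real.exp 1 * c1 ^ α ≤ c2) :
    let x : ℝ := α / c1 *
      (Real.log (c2 * Real.exp 1 / c1 ^ α) + Real.log (Real.log (c2 / c1 ^ α)))
    Real.log (c2 * x ^ α) ≤ c1 * x := by
  obtain ⟨hα1, hα2⟩ := hα
  have hαpos : (0:ℝ) < α := lt_of_lt_of_le one_pos hα1
  have hc1α : (0:ℝ) < c1 ^ α := Real.rpow_pos_of_pos hc1 α
  set L : ℝ := Real.log (c2 / c1 ^ α) with hLdef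
  have hratio : Real.exp 1 ≤ c2 / c1 ^ α := by
    rw [le_div_iff₀ hc1α]; linarith
  have hL1 : 1 ≤ L := by
    have := Real.log_le_log (Real.exp_pos 1) hratio
    rwa [Real.log_exp] at this
  have hLpos : (0:ℝ) < L := by linarith
  have hlogL0 : 0 ≤ Real.log L := Real.log_nonneg hL1
  -- first log simplifies
  have hfirst : Real.log (c2 * Real.exp 1 / c1 ^ α) = L + 1 := by
    have : c2 * Real.exp 1 / c1 ^ α = (c2 / c1 ^ α) * Real.exp 1 := by ring
    rw [this, Real.log_mul (by positivity) (Real.exp_ne_zero 1), Real.log_exp]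
  intro x
  have hxdef : x = α / c1 * (L + 1 + Real.log L) := by
    show α / c1 * (Real.log (c2 * Real.exp 1 / c1 ^ α) + Real.log L)
        = α / c1 * (L + 1 + Real.log L)
    rw [hfirst]
  set S : ℝ := L + 1 + Real.log L with hSdef
  have hS2 : (2:ℝ) ≤ S := by simp only [hSdef]; linarith
  have hSpos : (0:ℝ) < S := by linarith
  have hxpos : 0 < x := by rw [hxdef]; positivity
  have hc1x : c1 * x = α * S := by
    rw [hxdef]; field_simp
  -- log of the LHS
  have hlogx : Real.log x = Real.log α - Real.log c1 + Real.log S := by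
    rw [hxdef, Real.log_mul (by positivity) (ne_of_gt hSpos),
      Real.log_div (ne_of_gt hαpos) (ne_of_gt hc1)]
  have hlogc2 : Real.log c2 = L + α * Real.log c1 := by
    rw [hLdef, Real.log_div (ne_of_gt hc2) (ne_of_gt hc1α), Real.log_rpow hc1]
    ring
  have hmain : Real.log (c2 * x ^ α) = Real.log c2 + α * Real.log x := by
    rw [Real.log_mul (ne_of_gt hc2) (by positivity), Real.log_rpow hxpos]
  rw [hmain, hc1x, hlogc2, hlogx]
  -- key estimates
  have hlogLsub : Real.log L ≤ L - 1 := Real.log_le_sub_one_of_pos hLpos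
  have hlogS : Real.log S ≤ Real.log 2 + Real.log L := by
    have hS2L : S ≤ 2 * L := by simp only [hSdef]; linarith
    calc Real.log S ≤ Real.log (2 * L) := Real.log_le_log hSpos hS2L
      _ = Real.log 2 + Real.log L := Real.log_mul two_ne_zero (ne_of_gt hLpos)
  have hlogα : Real.log α ≤ 1 - Real.log 2 := by
    have := Real.log_le_log hαpos hα2
    rwa [Real.log_div (Real.exp_ne_zero 1) two_ne_zero, Real.log_exp] at this
  have h1 : α * Real.log S ≤ α * (Real.log 2 + Real.log L) :=
    mul_le_mul_of_nonneg_left hlogS (le_of_lt hαpos)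
  have h2 : α * Real.log α ≤ α * (1 - Real.log 2) :=
    mul_le_mul_of_nonneg_left hlogα (le_of_lt hαpos)
  have h3 : L ≤ α * L := le_mul_of_one_le_left (le_of_lt hLpos) hα1
  simp only [hSdef]
  nlinarith [h1, h2, h3]
end
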